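/- Let J = diag(1,1,1,−1) and let m, x₀, m', x₀' > 0 be real constants. Suppose g is an invertible real 4×4 matrix with gᵀ·J·g = J (a representative of a Möbius transformation) such that the induced projective map of ℙ³(ℝ) sends the image of the twisted cubic Γ̃_{m,x₀} onto the image of the twisted cubic Γ̃_{m',x₀'}. Then m = m' and x₀ = x₀'. That is, distinct parameter pairs (m, x₀) give Möbius-inequivalent twisted cubics, so each hexagonal web of the classified family is equivalent to exactly one member of the family. -/
import Mathlib


/-- The homogenized twisted cubic parametrization as a vector in `ℝ⁴`. -/
def gammaTilde (m x₀ s t : ℝ) : Fin 4 → ℝ :=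
  ![m * s * (t ^ 2 - s ^ 2), t * (t ^ 2 - s ^ 2), m * x₀ * s ^ 2 * t, m * x₀ * s * t ^ 2]

/-- The affine cone in `ℝ⁴` over the twisted cubic in `ℙ³(ℝ)` parametrized by `Γ̃`. -/
def twistedCubicCone (m x₀ : ℝ) : Set (Fin 4 → ℝ) :=
  {v | ∃ s t c : ℝ, v = c • gammaTilde m x₀ s t}

/-! ### Auxiliary machinery -/

/-- The Lorentz bilinear form on `ℝ⁴`. -/
def Bf (v w : Fin 4 → ℝ) : ℝ := v 0 * w 0 + v 1 * w 1 + v 2 * w 2 - v 3 * w 3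

lemma Bf_gamma (m x s t s' t' : ℝ) :
    Bf (gammaTilde m x s t) (gammaTilde m x s' t') =
      (t^2 - s^2) * (t'^2 - s'^2) * (m^2*s*s' + t*t') + m^2*x^2*s*s'*t*t'*(s*s' - t*t') := by
  simp [Bf, gammaTilde]; ring

lemma Bf_smul (c d : ℝ) (v w : Fin 4 → ℝ) : Bf (c • v) (d • w) = c * d * Bf v w := by
  simp [Bf, Pi.smul_apply, smul_eq_mul]; ring

lemma gamma_zero (m x : ℝ) : gammaTilde m x 0 0 = 0 := by
  funext i; fin_cases i <;> simp [gammaTilde]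

lemma gamma_hom (m x s e : ℝ) : gammaTilde m x s (e * s) = s^3 • gammaTilde m x 1 e := by
  funext i; fin_cases i <;> simp [gammaTilde] <;> ring

lemma Bf_pres (g : Matrix (Fin 4) (Fin 4) ℝ)
    (hmob : g.transpose * Matrix.diagonal ![1, 1, 1, -1] * g = Matrix.diagonal ![1, 1, 1, -1])
    (v w : Fin 4 → ℝ) : Bf (g.mulVec v) (g.mulVec w) = Bf v w := by
  have e : ∀ i j : Fin 4,
      g 0 i * g 0 j + g 1 i * g 1 j + g 2 i * g 2 j - g 3 i * g 3 j
        = Matrix.diagonal ![(1:ℝ), 1, 1, -1] i j := by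
    intro i j
    have h := congrFun (congrFun hmob i) j
    simp [Matrix.mul_apply, Matrix.diagonal_apply, Fin.sum_univ_four, Matrix.transpose_apply] at h ⊢
    rcases h with h; linarith [h]
  have h00 := e 0 0; have h01 := e 0 1; have h02 := e 0 2; have h03 := e 0 3
  have h11 := e 1 1; have h12 := e 1 2; have h13 := e 1 3
  have h22 := e 2 2; have h23 := e 2 3; have h33 := e 3 3
  simp [Matrix.diagonal_apply] at h00 h01 h02 h03 h11 h12 h13 h22 h23 h33
  simp only [Bf, Matrix.mulVec, dotProduct, Fin.sum_univ_four]
  linear_combination (v 0 * w 0) * h00 + (v 0 * w 1 + v 1 * w 0) * h01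
    + (v 0 * w 2 + v 2 * w 0) * h02 + (v 0 * w 3 + v 3 * w 0) * h03
    + (v 1 * w 1) * h11 + (v 1 * w 2 + v 2 * w 1) * h12 + (v 1 * w 3 + v 3 * w 1) * h13
    + (v 2 * w 2) * h22 + (v 2 * w 3 + v 3 * w 2) * h23 + (v 3 * w 3) * h33

lemma exists_u (m x : ℝ) (hm : 0 < m) (hx : 0 < x) :
    ∃ u : ℝ, 1 < u ∧ m^2*x^2*u^2 = (m^2+u^2)*(u^2-1) := by
  have key : ∃ w : ℝ, 1 < w ∧ m^2*x^2*w = (m^2+w)*(w-1) := by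
    obtain ⟨s, hs0, hs2⟩ : ∃ s : ℝ, 0 < s ∧ s^2 = (1 + m^2*x^2 - m^2)^2 + 4*m^2 :=
      ⟨Real.sqrt ((1 + m^2*x^2 - m^2)^2 + 4*m^2), Real.sqrt_pos.mpr (by positivity),
        Real.sq_sqrt (by positivity)⟩
    have hmx : 0 < m^2*x^2 := by positivity
    refine ⟨(1 + m^2*x^2 - m^2 + s)/2, ?_, ?_⟩
    · nlinarith [hs2, hs0, hmx]
    · nlinarith [hs2]
  obtain ⟨w, hw1, hwrel⟩ := key
  have hwpos : 0 < w := by linarith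
  refine ⟨Real.sqrt w, ?_, ?_⟩
  · nlinarith [Real.sq_sqrt hwpos.le, Real.sqrt_nonneg w]
  · rw [Real.sq_sqrt hwpos.le]; linear_combination hwrel

lemma null_classify (m x u : ℝ) (hm : 0 < m) (hu : 1 < u)
    (hrel : m^2*x^2*u^2 = (m^2+u^2)*(u^2-1)) (s t c : ℝ)
    (hne : c • gammaTilde m x s t ≠ (0 : Fin 4 → ℝ))
    (hnull : Bf (c • gammaTilde m x s t) (c • gammaTilde m x s t) = 0) :
    ∃ d η : ℝ, d ≠ 0 ∧ (η = 1 ∨ η = -1 ∨ η = u ∨ η = -u) ∧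
      c • gammaTilde m x s t = d • gammaTilde m x 1 η := by
  have hc : c ≠ 0 := by rintro rfl; exact hne (zero_smul _ _)
  have hΓ : gammaTilde m x s t ≠ 0 := by rintro h; rw [h] at hne; exact hne (smul_zero _)
  have hS : Bf (gammaTilde m x s t) (gammaTilde m x s t) = 0 := by
    rw [Bf_smul] at hnull
    rcases mul_eq_zero.mp hnull with h | h
    · exact absurd (mul_self_eq_zero.mp (by linarith [h])) hc
    · exact h
  have hst : ¬ (s = 0 ∧ t = 0) := by
    rintro ⟨rfl, rfl⟩; exact hΓ (gamma_zero m x)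
  have hfac : (t^2-s^2)*((t-u*s)*(t+u*s))*(u^2*t^2+m^2*s^2)
      = u^2 * Bf (gammaTilde m x s t) (gammaTilde m x s t) := by
    rw [Bf_gamma]; linear_combination ((t^2-s^2)*s^2*t^2)*hrel
  rw [hS, mul_zero] at hfac
  have hupos : 0 < u := by linarith
  rcases mul_eq_zero.mp hfac with h12 | h3
  · rcases mul_eq_zero.mp h12 with h1 | h2
    · have hs0 : s ≠ 0 := by
        rintro rfl; exact hst ⟨rfl, by nlinarith [h1]⟩
      have : (t - s) * (t + s) = 0 := by linear_combination h1
      rcases mul_eq_zero.mp this with h | h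
      · refine ⟨c * s^3, 1, by positivity, Or.inl rfl, ?_⟩
        have ht : t = 1 * s := by linarith
        rw [ht, gamma_hom, smul_smul]
      · refine ⟨c * s^3, -1, by positivity, Or.inr (Or.inl rfl), ?_⟩
        have ht : t = (-1) * s := by linarith
        rw [ht, gamma_hom, smul_smul]
    · have hs0 : s ≠ 0 := by
        rintro rfl
        rcases mul_eq_zero.mp h2 with h | h
        · exact hst ⟨rfl, by linarith [h]⟩
        · exact hst ⟨rfl, by linarith [h]⟩
      rcases mul_eq_zero.mp h2 with h | h
      · refine ⟨c * s^3, u, by positivity, Or.inr (Or.inr (Or.inl rfl)), ?_⟩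
        have ht : t = u * s := by linarith
        rw [ht, gamma_hom, smul_smul]
      · refine ⟨c * s^3, -u, by positivity, Or.inr (Or.inr (Or.inr rfl)), ?_⟩
        have ht : t = (-u) * s := by linarith
        rw [ht, gamma_hom, smul_smul]
  · exfalso
    have hs0 : s = 0 := by
      have h1 : (m*s)^2 = 0 := le_antisymm (by nlinarith [sq_nonneg (u*t)]) (sq_nonneg _)
      rcases mul_eq_zero.mp (sq_eq_zero_iff.mp h1) with h | h
      · exact absurd h hm.ne'
      · exact h
    have ht0 : t = 0 := by
      have h1 : (u*t)^2 = 0 := le_antisymm (by nlinarith [sq_nonneg (m*s)]) (sq_nonneg _)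
      rcases mul_eq_zero.mp (sq_eq_zero_iff.mp h1) with h | h
      · exact absurd h (by linarith)
      · exact h
    exact hst ⟨hs0, ht0⟩

lemma no_perp_mixed (m x u σ τ e ε : ℝ) (hm : 0 < m) (hx : 0 < x) (hu : 1 < u)
    (he : e = 1 ∨ e = -1) (hε : ε = 1 ∨ ε = -1)
    (h1 : Bf (gammaTilde m x σ τ) (gammaTilde m x 1 e) = 0)
    (h2 : Bf (gammaTilde m x σ τ) (gammaTilde m x 1 (ε*u)) = 0) :
    gammaTilde m x σ τ = 0 := by
  rw [Bf_gamma] at h1 h2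
  have hmx : (0:ℝ) < m^2*x^2 := by positivity
  have hu0 : (0:ℝ) < u := by linarith
  have h1' : σ * τ * (σ - e*τ) = 0 := by
    rcases he with rfl | rfl
    · have : m^2*x^2*(σ * τ * (σ - 1*τ)) = 0 := by linear_combination h1
      rcases mul_eq_zero.mp this with h | h
      · exact absurd h hmx.ne'
      · linarith [h]
    · have : m^2*x^2*(σ * τ * (σ - (-1)*τ)) = 0 := by linear_combination (-1 : ℝ) * h1
      rcases mul_eq_zero.mp this with h | h
      · exact absurd h hmx.ne'
      · linarith [h]
  have hεu : ε*u ≠ 0 := by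
    have hε0 : ε ≠ 0 := by rcases hε with rfl | rfl <;> norm_num
    exact mul_ne_zero hε0 (by linarith)
  have h2' : (τ^2-σ^2)*(u^2-1)*(m^2*σ + τ*ε*u) + m^2*x^2*σ*τ*ε*u*(σ - τ*ε*u) = 0 := by
    rcases hε with rfl | rfl <;> · linear_combination h2
  suffices hστ : σ = 0 ∧ τ = 0 by rw [hστ.1, hστ.2]; exact gamma_zero m x
  rcases mul_eq_zero.mp h1' with h | hd
  · rcases mul_eq_zero.mp h with hσ | hτ
    · refine ⟨hσ, ?_⟩
      have h3 : (ε*u)*((u^2-1)*τ^3) = 0 := by rw [hσ] at h2'; linear_combination h2'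
      rcases mul_eq_zero.mp h3 with h | h
      · exact absurd h hεu
      · rcases mul_eq_zero.mp h with h | h
        · nlinarith
        · exact pow_eq_zero_iff (by norm_num) |>.mp h
    · have h3 : (u^2-1)*(m^2*σ^3) = 0 := by rw [hτ] at h2'; linear_combination (-1:ℝ) * h2'
      refine ⟨?_, hτ⟩
      rcases mul_eq_zero.mp h3 with h | h
      · nlinarith
      · rcases mul_eq_zero.mp h with h | h
        · exact absurd h (by positivity)
        · exact pow_eq_zero_iff (by norm_num) |>.mp h
  · have hσveq : σ = e*τ := by linarith
    have h3 : (m^2*x^2) * ((ε*u)*(1 - e*ε*u)) * τ^3 = 0 := by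
      rw [hσveq] at h2'
      rcases he with rfl | rfl <;> · linear_combination h2'
    have hne1 : (ε*u)*(1 - e*ε*u) ≠ 0 := by
      apply mul_ne_zero hεu
      rcases he with rfl | rfl <;> rcases hε with rfl | rfl <;> intro hq <;> nlinarith
    have hτ0 : τ = 0 := by
      rcases mul_eq_zero.mp h3 with h | h
      · rcases mul_eq_zero.mp h with h | h
        · exact absurd h hmx.ne'
        · exact absurd h hne1
      · exact pow_eq_zero_iff (by norm_num) |>.mp h
    exact ⟨by rw [hσveq, hτ0, mul_zero], hτ0⟩

lemma no_perp_both (m x u σ τ : ℝ) (hm : 0 < m) (hx : 0 < x) (hu : 1 < u)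
    (h1 : Bf (gammaTilde m x σ τ) (gammaTilde m x 1 u) = 0)
    (h2 : Bf (gammaTilde m x σ τ) (gammaTilde m x 1 (-u)) = 0) :
    gammaTilde m x σ τ = 0 := by
  rw [Bf_gamma] at h1 h2
  have hu0 : (0:ℝ) < u := by linarith
  have hd : (2*u) * (τ*((τ^2-σ^2)*(u^2-1) + m^2*x^2*σ^2)) = 0 := by linear_combination h1 - h2
  have hs : (2*m^2) * (σ*((τ^2-σ^2)*(u^2-1) - x^2*u^2*τ^2)) = 0 := by linear_combination h1 + h2
  have hd' : τ*((τ^2-σ^2)*(u^2-1) + m^2*x^2*σ^2) = 0 := by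
    rcases mul_eq_zero.mp hd with h | h
    · linarith
    · exact h
  have hs' : σ*((τ^2-σ^2)*(u^2-1) - x^2*u^2*τ^2) = 0 := by
    rcases mul_eq_zero.mp hs with h | h
    · nlinarith
    · exact h
  suffices hστ : σ = 0 ∧ τ = 0 by rw [hστ.1, hστ.2]; exact gamma_zero m x
  rcases mul_eq_zero.mp hd' with hτ | hrel
  · refine ⟨?_, hτ⟩
    rw [hτ] at hs'
    rcases mul_eq_zero.mp hs' with h | h
    · exact h
    · have h4 : σ^2*(u^2-1) = 0 := by linear_combination (-1:ℝ) * h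
      rcases mul_eq_zero.mp h4 with h' | h'
      · exact sq_eq_zero_iff.mp h'
      · nlinarith
  · rcases mul_eq_zero.mp hs' with hσ | h
    · refine ⟨hσ, ?_⟩
      rw [hσ] at hrel
      have h4 : τ^2*(u^2-1) = 0 := by linear_combination hrel
      rcases mul_eq_zero.mp h4 with h' | h'
      · exact sq_eq_zero_iff.mp h'
      · nlinarith
    · have hcomb : x^2*(m^2*σ^2 + u^2*τ^2) = 0 := by linear_combination hrel - h
      have hsum : m^2*σ^2 + u^2*τ^2 = 0 := by
        rcases mul_eq_zero.mp hcomb with h' | h'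
        · exact absurd h' (by positivity)
        · exact h'
      have hσ0 : σ = 0 := by
        have h5 : (m*σ)^2 = 0 := le_antisymm (by nlinarith [sq_nonneg (u*τ)]) (sq_nonneg _)
        rcases mul_eq_zero.mp (sq_eq_zero_iff.mp h5) with h' | h'
        · exact absurd h' hm.ne'
        · exact h'
      have hτ0 : τ = 0 := by
        have h5 : (u*τ)^2 = 0 := le_antisymm (by nlinarith [sq_nonneg (m*σ)]) (sq_nonneg _)
        rcases mul_eq_zero.mp (sq_eq_zero_iff.mp h5) with h' | h'
        · exact absurd h' (by linarith)
        · exact h'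
      exact ⟨hσ0, hτ0⟩

/-! ### Values of the form on special curve points -/

section values
variable (m x u : ℝ)

lemma bv_pm : Bf (gammaTilde m x 1 1) (gammaTilde m x 1 (-1)) = -(2*m^2*x^2) := by
  rw [Bf_gamma]; ring

lemma bv_mp : Bf (gammaTilde m x 1 (-1)) (gammaTilde m x 1 1) = -(2*m^2*x^2) := by
  rw [Bf_gamma]; ring

lemma bv_d1 : Bf (gammaTilde m x 1 1) (gammaTilde m x 1 1) = 0 := by
  rw [Bf_gamma]; ring

lemma bv_dm1 : Bf (gammaTilde m x 1 (-1)) (gammaTilde m x 1 (-1)) = 0 := by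
  rw [Bf_gamma]; ring

lemma bv_01 : Bf (gammaTilde m x 1 0) (gammaTilde m x 1 1) = 0 := by
  rw [Bf_gamma]; ring

lemma bv_0m1 : Bf (gammaTilde m x 1 0) (gammaTilde m x 1 (-1)) = 0 := by
  rw [Bf_gamma]; ring

lemma bv_1r : Bf (gammaTilde m x 1 1) (gammaTilde m x 1 u) = -(m^2*x^2*u*(u-1)) := by
  rw [Bf_gamma]; ring

lemma bv_1mr : Bf (gammaTilde m x 1 1) (gammaTilde m x 1 (-u)) = -(m^2*x^2*u*(u+1)) := by
  rw [Bf_gamma]; ring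

lemma bv_m1r : Bf (gammaTilde m x 1 (-1)) (gammaTilde m x 1 u) = -(m^2*x^2*u*(u+1)) := by
  rw [Bf_gamma]; ring

lemma bv_m1mr : Bf (gammaTilde m x 1 (-1)) (gammaTilde m x 1 (-u)) = -(m^2*x^2*u*(u-1)) := by
  rw [Bf_gamma]; ring

variable (hrel : m^2*x^2*u^2 = (m^2+u^2)*(u^2-1))

include hrel in
lemma bv_dr : Bf (gammaTilde m x 1 u) (gammaTilde m x 1 u) = 0 := by
  rw [Bf_gamma]; linear_combination (-(u^2-1))*hrel

include hrel in
lemma bv_dmr : Bf (gammaTilde m x 1 (-u)) (gammaTilde m x 1 (-u)) = 0 := by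
  rw [Bf_gamma]; linear_combination (-(u^2-1))*hrel

include hrel in
lemma bv_rmr : Bf (gammaTilde m x 1 u) (gammaTilde m x 1 (-u)) = -(2*(u^2-1)*(m^2+u^4)) := by
  rw [Bf_gamma]; linear_combination (-(1+u^2))*hrel

include hrel in
lemma bv_mrr : Bf (gammaTilde m x 1 (-u)) (gammaTilde m x 1 u) = -(2*(u^2-1)*(m^2+u^4)) := by
  rw [Bf_gamma]; linear_combination (-(1+u^2))*hrel

end values

lemma pos_sq_eq (a b : ℝ) (ha : 0 < a) (hb : 0 < b) (h : a^2 = b^2) : a = b := by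
  have : (a-b)*(a+b) = 0 := by linear_combination h
  rcases mul_eq_zero.mp this with h' | h'
  · linarith
  · linarith

lemma cancel_D (d2 d3 d4 d5 V24 V35 V23 V45 S24 S35 S23 S45 : ℝ)
    (h2 : d2 ≠ 0) (h3 : d3 ≠ 0) (h4 : d4 ≠ 0) (h5 : d5 ≠ 0)
    (E24 : d2*d4*V24 = S24) (E35 : d3*d5*V35 = S35)
    (E23 : d2*d3*V23 = S23) (E45 : d4*d5*V45 = S45) :
    S24*S35*(V23*V45) = S23*S45*(V24*V35) := by
  have hP1 : (d2*d3*d4*d5) * (V24*V35) = S24*S35 := by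
    linear_combination (d3*d5*V35)*E24 + S24*E35
  have hP2 : (d2*d3*d4*d5) * (V23*V45) = S23*S45 := by
    linear_combination (d4*d5*V45)*E23 + S23*E45
  have hbr : (d2*d3*d4*d5) * (S24*S35*(V23*V45) - S23*S45*(V24*V35)) = 0 := by
    linear_combination (S24*S35)*hP2 - (S23*S45)*hP1
  have hD : d2*d3*d4*d5 ≠ 0 :=
    mul_ne_zero (mul_ne_zero (mul_ne_zero h2 h3) h4) h5
  rcases mul_eq_zero.mp hbr with h | h
  · exact absurd h hD
  · linarith

lemma endgame (m x u M X U A B : ℝ) (hm : 0 < m) (hx : 0 < x) (hu : 1 < u)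
    (hM : 0 < M) (hX : 0 < X) (hU : 1 < U)
    (hrel : m^2*x^2*u^2 = (m^2+u^2)*(u^2-1)) (hREL : M^2*X^2*U^2 = (M^2+U^2)*(U^2-1))
    (hAB : (A = M^4*X^4*U^2*(U-1)^2 ∧ B = M^4*X^4*U^2*(U+1)^2) ∨
           (A = M^4*X^4*U^2*(U+1)^2 ∧ B = M^4*X^4*U^2*(U-1)^2))
    (hI : m^4*x^4*u^2*(u-1)^2 * (4*M^2*X^2*(U^2-1)*(M^2+U^4)) =
          4*m^2*x^2*(u^2-1)*(m^2+u^4) * A)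
    (hII : m^4*x^4*u^2*(u+1)^2 * (4*M^2*X^2*(U^2-1)*(M^2+U^4)) =
          4*m^2*x^2*(u^2-1)*(m^2+u^4) * B) :
    m = M ∧ x = X := by
  obtain ⟨S, hSdef⟩ : ∃ S : ℝ, S = m^4*x^4*u^2 * (4*M^2*X^2*(U^2-1)*(M^2+U^4)) := ⟨_, rfl⟩
  obtain ⟨T, hTdef⟩ : ∃ T : ℝ, T = 4*m^2*x^2*(u^2-1)*(m^2+u^4) * (M^4*X^4*U^2) := ⟨_, rfl⟩
  have hU2 : (0:ℝ) < U^2-1 := by nlinarith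
  have hu2 : (0:ℝ) < u^2-1 := by nlinarith
  have hSpos : 0 < S := by
    rw [hSdef]
    exact mul_pos (by positivity) (mul_pos (mul_pos (by positivity) hU2) (by positivity))
  have hTpos : 0 < T := by
    rw [hTdef]
    exact mul_pos (mul_pos (mul_pos (by positivity) hu2) (by positivity)) (by positivity)
  rcases hAB with ⟨hA, hB⟩ | ⟨hA, hB⟩
  · have hI' : S * (u-1)^2 = T * (U-1)^2 := by
      rw [hSdef, hTdef]; linear_combination hI + (4*m^2*x^2*(u^2-1)*(m^2+u^4)) * hA
    have hII' : S * (u+1)^2 = T * (U+1)^2 := by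
      rw [hSdef, hTdef]; linear_combination hII + (4*m^2*x^2*(u^2-1)*(m^2+u^4)) * hB
    have hcross : S * (((u-1)*(U+1))^2 - ((u+1)*(U-1))^2) = 0 := by
      linear_combination (U+1)^2 * hI' - (U-1)^2 * hII'
    have hsq : ((u-1)*(U+1))^2 = ((u+1)*(U-1))^2 := by
      rcases mul_eq_zero.mp hcross with h | h
      · exact absurd h hSpos.ne'
      · linarith
    have huU : u = U := by
      have h := pos_sq_eq _ _ (mul_pos (by linarith : (0:ℝ) < u-1) (by linarith : (0:ℝ) < U+1))
        (mul_pos (by linarith : (0:ℝ) < u+1) (by linarith : (0:ℝ) < U-1)) hsq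
      linear_combination h / 2
    subst huU
    have hST : S = T := by
      have h0 : (S - T) * (u-1)^2 = 0 := by linear_combination hI'
      rcases mul_eq_zero.mp h0 with h' | h'
      · linarith
      · exact absurd h' (pow_pos (by linarith : (0:ℝ) < u-1) 2).ne'
    have hkey : m^2*x^2*(M^2+u^4) = M^2*X^2*(m^2+u^4) := by
      have hc : ((4*m^2*x^2*M^2*X^2*u^2)*(u^2-1)) * (m^2*x^2*(M^2+u^4) - M^2*X^2*(m^2+u^4)) = 0 := by
        rw [hSdef, hTdef] at hST; linear_combination hST
      rcases mul_eq_zero.mp hc with h' | h'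
      · exact absurd h' (mul_pos (by positivity) hu2).ne'
      · linarith
    have hmM : m = M := by
      have h6 : (m^2 - M^2) * (u^2*(u^2-1)^2) = 0 := by
        linear_combination u^2 * hkey - (M^2+u^4) * hrel + (m^2+u^4) * hREL
      rcases mul_eq_zero.mp h6 with h' | h'
      · exact pos_sq_eq _ _ hm hM (by linarith)
      · exact absurd h' (mul_pos (by positivity : (0:ℝ) < u^2) (pow_pos hu2 2)).ne'
    subst hmM
    have hxX : x = X := by
      have h7 : (m^2*u^2) * (x^2 - X^2) = 0 := by linear_combination hrel - hREL
      rcases mul_eq_zero.mp h7 with h' | h'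
      · exact absurd h' (by positivity : (0:ℝ) < m^2*u^2).ne'
      · exact pos_sq_eq _ _ hx hX (by linarith)
    exact ⟨rfl, hxX⟩
  · exfalso
    have hI' : S * (u-1)^2 = T * (U+1)^2 := by
      rw [hSdef, hTdef]; linear_combination hI + (4*m^2*x^2*(u^2-1)*(m^2+u^4)) * hA
    have hII' : S * (u+1)^2 = T * (U-1)^2 := by
      rw [hSdef, hTdef]; linear_combination hII + (4*m^2*x^2*(u^2-1)*(m^2+u^4)) * hB
    have hcross : S * (((u-1)*(U-1))^2 - ((u+1)*(U+1))^2) = 0 := by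
      linear_combination (U-1)^2 * hI' - (U+1)^2 * hII'
    have hsq : ((u-1)*(U-1))^2 = ((u+1)*(U+1))^2 := by
      rcases mul_eq_zero.mp hcross with h | h
      · exact absurd h hSpos.ne'
      · linarith
    have h := pos_sq_eq _ _ (mul_pos (by linarith : (0:ℝ) < u-1) (by linarith : (0:ℝ) < U-1))
      (mul_pos (by linarith : (0:ℝ) < u+1) (by linarith : (0:ℝ) < U+1)) hsq
    have h0 : u + U = 0 := by linear_combination (-1/2 : ℝ) * h
    linarith

/-- if a Möbius transformation — induced by an invertible matrix `g` with
`gᵀ·diag(1,1,1,−1)·g = diag(1,1,1,−1)` — maps the twisted cubic of parameters `(m, x₀)`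
onto the twisted cubic of parameters `(m', x₀')` (equivalently, `g` maps the affine cone
over the first curve onto the affine cone over the second), then `m = m'` and
`x₀ = x₀'`: distinct parameter pairs give Möbius-inequivalent twisted cubics. -/
theorem twisted_cubics_mobius_inequivalent (m x₀ m' x₀' : ℝ)
    (hm : 0 < m) (hx₀ : 0 < x₀) (hm' : 0 < m') (hx₀' : 0 < x₀')
    (g : Matrix (Fin 4) (Fin 4) ℝ) (hg : IsUnit g.det)
    (hmob : g.transpose * Matrix.diagonal ![1, 1, 1, -1] * g = Matrix.diagonal ![1, 1, 1, -1])
    (himg : (fun v => g.mulVec v) '' twistedCubicCone m x₀ = twistedCubicCone m' x₀') :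
    m = m' ∧ x₀ = x₀' := by
  have hBg := Bf_pres g hmob
  -- g has trivial kernel
  have hker : ∀ v : Fin 4 → ℝ, g.mulVec v = 0 → v = 0 := by
    intro v hv
    have h0 := hBg v ![1,0,0,0]
    have h1 := hBg v ![0,1,0,0]
    have h2 := hBg v ![0,0,1,0]
    have h3 := hBg v ![0,0,0,1]
    rw [hv] at h0 h1 h2 h3
    simp [Bf] at h0 h1 h2 h3
    funext i
    fin_cases i
    · show v 0 = (0:ℝ); linarith [h0]
    · show v 1 = (0:ℝ); linarith [h1]
    · show v 2 = (0:ℝ); linarith [h2]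
    · show v 3 = (0:ℝ); linarith [h3]
  -- roots
  obtain ⟨u, hu1, hrel⟩ := exists_u m x₀ hm hx₀
  obtain ⟨U, hU1, hREL⟩ := exists_u m' x₀' hm' hx₀'
  have hu0 : (0:ℝ) < u := by linarith
  have hU0 : (0:ℝ) < U := by linarith
  -- source points are nonzero
  have hpne : ∀ a : ℝ, gammaTilde m x₀ 1 a ≠ 0 := by
    intro a h
    have h2 := congrFun h 2
    have h0 := congrFun h 0
    simp [gammaTilde] at h2 h0
    rcases h2 with h2 | h2
    · rcases h2 with h2 | h2
      · exact hm.ne' h2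
      · exact hx₀.ne' h2
    · rw [h2] at h0
      rcases h0 with h0 | h0
      · exact hm.ne' h0
      · norm_num at h0
  have hqne : ∀ a : ℝ, g.mulVec (gammaTilde m x₀ 1 a) ≠ 0 := fun a h => hpne a (hker _ h)
  -- membership in the target cone
  have hmem : ∀ a : ℝ, ∃ s t c : ℝ,
      g.mulVec (gammaTilde m x₀ 1 a) = c • gammaTilde m' x₀' s t := by
    intro a
    have hmemb : g.mulVec (gammaTilde m x₀ 1 a) ∈ twistedCubicCone m' x₀' := by
      rw [← himg]
      exact ⟨gammaTilde m x₀ 1 a, ⟨1, a, 1, (one_smul ℝ _).symm⟩, rfl⟩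
    exact hmemb
  -- representation of null images
  have getrep : ∀ a : ℝ, Bf (gammaTilde m x₀ 1 a) (gammaTilde m x₀ 1 a) = 0 →
      ∃ d η : ℝ, d ≠ 0 ∧ (η = 1 ∨ η = -1 ∨ η = U ∨ η = -U) ∧
        g.mulVec (gammaTilde m x₀ 1 a) = d • gammaTilde m' x₀' 1 η := by
    intro a ha
    obtain ⟨s, t, c, hc⟩ := hmem a
    have hne : c • gammaTilde m' x₀' s t ≠ (0 : Fin 4 → ℝ) := hc ▸ hqne a
    have hnull : Bf (c • gammaTilde m' x₀' s t) (c • gammaTilde m' x₀' s t) = 0 := by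
      rw [← hc, hBg]; exact ha
    obtain ⟨d, η, hd, hη, heq⟩ := null_classify m' x₀' U hm' hU1 hREL s t c hne hnull
    exact ⟨d, η, hd, hη, hc.trans heq⟩
  obtain ⟨d1, η1, hd1, hη1, hrep1⟩ := getrep 1 (bv_d1 m x₀)
  obtain ⟨d2, η2, hd2, hη2, hrep2⟩ := getrep (-1) (bv_dm1 m x₀)
  obtain ⟨d4, η4, hd4, hη4, hrep4⟩ := getrep u (bv_dr m x₀ u hrel)
  obtain ⟨d5, η5, hd5, hη5, hrep5⟩ := getrep (-u) (bv_dmr m x₀ u hrel)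
  -- representation of the image of the point with parameter 0
  obtain ⟨σ, τ, c₀, hq0⟩ := hmem 0
  have hc₀ : c₀ ≠ 0 := by
    rintro rfl; exact hqne 0 (by rw [hq0, zero_smul])
  have hΓστ : gammaTilde m' x₀' σ τ ≠ 0 := by
    rintro h; exact hqne 0 (by rw [hq0, h, smul_zero])
  -- perpendicularity of the image of 0 to the images of ±1
  have hperp : ∀ (a : ℝ) (d η : ℝ), d ≠ 0 →
      g.mulVec (gammaTilde m x₀ 1 a) = d • gammaTilde m' x₀' 1 η →
      Bf (gammaTilde m x₀ 1 0) (gammaTilde m x₀ 1 a) = 0 →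
      Bf (gammaTilde m' x₀' σ τ) (gammaTilde m' x₀' 1 η) = 0 := by
    intro a d η hd hrep hval
    have h := hBg (gammaTilde m x₀ 1 0) (gammaTilde m x₀ 1 a)
    rw [hq0, hrep, Bf_smul, hval] at h
    rcases mul_eq_zero.mp h with h' | h'
    · rcases mul_eq_zero.mp h' with h'' | h''
      · exact absurd h'' hc₀
      · exact absurd h'' hd
    · exact h'
  have hperp1 : Bf (gammaTilde m' x₀' σ τ) (gammaTilde m' x₀' 1 η1) = 0 :=
    hperp 1 d1 η1 hd1 hrep1 (bv_01 m x₀)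
  have hperp2 : Bf (gammaTilde m' x₀' σ τ) (gammaTilde m' x₀' 1 η2) = 0 :=
    hperp (-1) d2 η2 hd2 hrep2 (bv_0m1 m x₀)
  -- Gram equations between images
  have hE : ∀ (a b da db ηa ηb : ℝ),
      g.mulVec (gammaTilde m x₀ 1 a) = da • gammaTilde m' x₀' 1 ηa →
      g.mulVec (gammaTilde m x₀ 1 b) = db • gammaTilde m' x₀' 1 ηb →
      da * db * Bf (gammaTilde m' x₀' 1 ηa) (gammaTilde m' x₀' 1 ηb)
        = Bf (gammaTilde m x₀ 1 a) (gammaTilde m x₀ 1 b) := by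
    intro a b da db ηa ηb ha hb
    have h := hBg (gammaTilde m x₀ 1 a) (gammaTilde m x₀ 1 b)
    rw [ha, hb, Bf_smul] at h
    exact h
  have E23 := hE 1 (-1) d1 d2 η1 η2 hrep1 hrep2
  have E24 := hE 1 u d1 d4 η1 η4 hrep1 hrep4
  have E25 := hE 1 (-u) d1 d5 η1 η5 hrep1 hrep5
  have E34 := hE (-1) u d2 d4 η2 η4 hrep2 hrep4
  have E35 := hE (-1) (-u) d2 d5 η2 η5 hrep2 hrep5
  have E45 := hE u (-u) d4 d5 η4 η5 hrep4 hrep5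
  rw [bv_pm] at E23
  rw [bv_1r] at E24
  rw [bv_1mr] at E25
  rw [bv_m1r] at E34
  rw [bv_m1mr] at E35
  rw [bv_rmr m x₀ u hrel] at E45
  -- nonvanishing of the source Gram values
  have hS23 : -(2*m^2*x₀^2) ≠ 0 := by
    have : (0:ℝ) < 2*m^2*x₀^2 := by positivity
    exact ne_of_lt (by linarith)
  have hSm : (0:ℝ) < m^2*x₀^2*u := by positivity
  have hSa : -(m^2*x₀^2*u*(u-1)) ≠ 0 := by
    have : (0:ℝ) < m^2*x₀^2*u*(u-1) := mul_pos hSm (by linarith)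
    exact ne_of_lt (by linarith)
  have hSb : -(m^2*x₀^2*u*(u+1)) ≠ 0 := by
    have : (0:ℝ) < m^2*x₀^2*u*(u+1) := mul_pos hSm (by linarith)
    exact ne_of_lt (by linarith)
  have hS45 : -(2*(u^2-1)*(m^2+u^4)) ≠ 0 := by
    have : (0:ℝ) < 2*(u^2-1)*(m^2+u^4) :=
      mul_pos (mul_pos two_pos (by nlinarith)) (by positivity)
    exact ne_of_lt (by linarith)
  have hVne : ∀ (da db Va Sa : ℝ), da*db*Va = Sa → Sa ≠ 0 → Va ≠ 0 := by
    intro da db Va Sa hEq hSn h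
    rw [h, mul_zero] at hEq
    exact hSn hEq.symm
  -- pin down the images of the ±1 null lines
  have hpin : (η1 = 1 ∧ η2 = -1) ∨ (η1 = -1 ∧ η2 = 1) := by
    have hcr : Bf (gammaTilde m' x₀' 1 η1) (gammaTilde m' x₀' 1 η2) ≠ 0 := hVne _ _ _ _ E23 hS23
    rcases hη1 with h1 | h1 | h1 | h1 <;> rcases hη2 with h2 | h2 | h2 | h2 <;>
      rw [h1] at hperp1 hcr <;> rw [h2] at hperp2 hcr
    · exact absurd (bv_d1 m' x₀') hcr
    · exact Or.inl ⟨h1, h2⟩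
    · exact absurd (no_perp_mixed m' x₀' U σ τ 1 1 hm' hx₀' hU1 (Or.inl rfl) (Or.inl rfl)
        hperp1 (by rw [one_mul]; exact hperp2)) hΓστ
    · exact absurd (no_perp_mixed m' x₀' U σ τ 1 (-1) hm' hx₀' hU1 (Or.inl rfl) (Or.inr rfl)
        hperp1 (by rw [neg_one_mul]; exact hperp2)) hΓστ
    · exact Or.inr ⟨h1, h2⟩
    · exact absurd (bv_dm1 m' x₀') hcr
    · exact absurd (no_perp_mixed m' x₀' U σ τ (-1) 1 hm' hx₀' hU1 (Or.inr rfl) (Or.inl rfl)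
        hperp1 (by rw [one_mul]; exact hperp2)) hΓστ
    · exact absurd (no_perp_mixed m' x₀' U σ τ (-1) (-1) hm' hx₀' hU1 (Or.inr rfl) (Or.inr rfl)
        hperp1 (by rw [neg_one_mul]; exact hperp2)) hΓστ
    · exact absurd (no_perp_mixed m' x₀' U σ τ 1 1 hm' hx₀' hU1 (Or.inl rfl) (Or.inl rfl)
        hperp2 (by rw [one_mul]; exact hperp1)) hΓστ
    · exact absurd (no_perp_mixed m' x₀' U σ τ (-1) 1 hm' hx₀' hU1 (Or.inr rfl) (Or.inl rfl)
        hperp2 (by rw [one_mul]; exact hperp1)) hΓστ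
    · exact absurd (bv_dr m' x₀' U hREL) hcr
    · exact absurd (no_perp_both m' x₀' U σ τ hm' hx₀' hU1 hperp1 hperp2) hΓστ
    · exact absurd (no_perp_mixed m' x₀' U σ τ 1 (-1) hm' hx₀' hU1 (Or.inl rfl) (Or.inr rfl)
        hperp2 (by rw [neg_one_mul]; exact hperp1)) hΓστ
    · exact absurd (no_perp_mixed m' x₀' U σ τ (-1) (-1) hm' hx₀' hU1 (Or.inr rfl) (Or.inr rfl)
        hperp2 (by rw [neg_one_mul]; exact hperp1)) hΓστ
    · exact absurd (no_perp_both m' x₀' U σ τ hm' hx₀' hU1 hperp2 hperp1) hΓστ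
    · exact absurd (bv_dmr m' x₀' U hREL) hcr
  -- pin down the images of the ±u null lines
  have hp4 : η4 = U ∨ η4 = -U := by
    have hc14 : Bf (gammaTilde m' x₀' 1 η1) (gammaTilde m' x₀' 1 η4) ≠ 0 := hVne _ _ _ _ E24 hSa
    have hc24 : Bf (gammaTilde m' x₀' 1 η2) (gammaTilde m' x₀' 1 η4) ≠ 0 := hVne _ _ _ _ E34 hSb
    rcases hη4 with h4 | h4 | h4 | h4
    · rw [h4] at hc14 hc24
      rcases hpin with ⟨h1', h2'⟩ | ⟨h1', h2'⟩
      · rw [h1'] at hc14; exact absurd (bv_d1 m' x₀') hc14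
      · rw [h2'] at hc24; exact absurd (bv_d1 m' x₀') hc24
    · rw [h4] at hc14 hc24
      rcases hpin with ⟨h1', h2'⟩ | ⟨h1', h2'⟩
      · rw [h2'] at hc24; exact absurd (bv_dm1 m' x₀') hc24
      · rw [h1'] at hc14; exact absurd (bv_dm1 m' x₀') hc14
    · exact Or.inl h4
    · exact Or.inr h4
  have hp5 : η5 = U ∨ η5 = -U := by
    have hc15 : Bf (gammaTilde m' x₀' 1 η1) (gammaTilde m' x₀' 1 η5) ≠ 0 := hVne _ _ _ _ E25 hSb
    have hc25 : Bf (gammaTilde m' x₀' 1 η2) (gammaTilde m' x₀' 1 η5) ≠ 0 := hVne _ _ _ _ E35 hSa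
    rcases hη5 with h5 | h5 | h5 | h5
    · rw [h5] at hc15 hc25
      rcases hpin with ⟨h1', h2'⟩ | ⟨h1', h2'⟩
      · rw [h1'] at hc15; exact absurd (bv_d1 m' x₀') hc15
      · rw [h2'] at hc25; exact absurd (bv_d1 m' x₀') hc25
    · rw [h5] at hc15 hc25
      rcases hpin with ⟨h1', h2'⟩ | ⟨h1', h2'⟩
      · rw [h2'] at hc25; exact absurd (bv_dm1 m' x₀') hc25
      · rw [h1'] at hc15; exact absurd (bv_dm1 m' x₀') hc15
    · exact Or.inl h5
    · exact Or.inr h5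
  have hp45 : (η4 = U ∧ η5 = -U) ∨ (η4 = -U ∧ η5 = U) := by
    have hc45 : Bf (gammaTilde m' x₀' 1 η4) (gammaTilde m' x₀' 1 η5) ≠ 0 := hVne _ _ _ _ E45 hS45
    rcases hp4 with h4 | h4 <;> rcases hp5 with h5 | h5 <;> rw [h4, h5] at hc45
    · exact absurd (bv_dr m' x₀' U hREL) hc45
    · exact Or.inl ⟨h4, h5⟩
    · exact Or.inr ⟨h4, h5⟩
    · exact absurd (bv_dmr m' x₀' U hREL) hc45
  -- final case analysis
  rcases hpin with ⟨h1, h2⟩ | ⟨h1, h2⟩ <;> rcases hp45 with ⟨h4, h5⟩ | ⟨h4, h5⟩ <;>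
    rw [h1, h2] at E23 <;> rw [h1, h4] at E24 <;> rw [h1, h5] at E25 <;>
    rw [h2, h4] at E34 <;> rw [h2, h5] at E35 <;> rw [h4, h5] at E45
  · -- (1, -1, U, -U) : aligned
    rw [bv_pm m' x₀'] at E23
    rw [bv_1r m' x₀' U] at E24
    rw [bv_1mr m' x₀' U] at E25
    rw [bv_m1r m' x₀' U] at E34
    rw [bv_m1mr m' x₀' U] at E35
    rw [bv_rmr m' x₀' U hREL] at E45
    have hI0 := cancel_D _ _ _ _ _ _ _ _ _ _ _ _ hd1 hd2 hd4 hd5 E24 E35 E23 E45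
    have E45' : d5 * d4 * (-(2*(U^2-1)*(m'^2+U^4))) = -(2*(u^2-1)*(m^2+u^4)) := by
      linear_combination E45
    have hII0 := cancel_D _ _ _ _ _ _ _ _ _ _ _ _ hd1 hd2 hd5 hd4 E25 E34 E23 E45'
    exact endgame m x₀ u m' x₀' U (m'^4*x₀'^4*U^2*(U-1)^2) (m'^4*x₀'^4*U^2*(U+1)^2)
      hm hx₀ hu1 hm' hx₀' hU1 hrel hREL (Or.inl ⟨rfl, rfl⟩)
      (by linear_combination hI0) (by linear_combination hII0)
  · -- (1, -1, -U, U) : anti-aligned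
    rw [bv_pm m' x₀'] at E23
    rw [bv_1mr m' x₀' U] at E24
    rw [bv_1r m' x₀' U] at E25
    rw [bv_m1mr m' x₀' U] at E34
    rw [bv_m1r m' x₀' U] at E35
    rw [bv_mrr m' x₀' U hREL] at E45
    have hI0 := cancel_D _ _ _ _ _ _ _ _ _ _ _ _ hd1 hd2 hd4 hd5 E24 E35 E23 E45
    have E45' : d5 * d4 * (-(2*(U^2-1)*(m'^2+U^4))) = -(2*(u^2-1)*(m^2+u^4)) := by
      linear_combination E45
    have hII0 := cancel_D _ _ _ _ _ _ _ _ _ _ _ _ hd1 hd2 hd5 hd4 E25 E34 E23 E45'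
    exact endgame m x₀ u m' x₀' U (m'^4*x₀'^4*U^2*(U+1)^2) (m'^4*x₀'^4*U^2*(U-1)^2)
      hm hx₀ hu1 hm' hx₀' hU1 hrel hREL (Or.inr ⟨rfl, rfl⟩)
      (by linear_combination hI0) (by linear_combination hII0)
  · -- (-1, 1, U, -U) : anti-aligned
    rw [bv_mp m' x₀'] at E23
    rw [bv_m1r m' x₀' U] at E24
    rw [bv_m1mr m' x₀' U] at E25
    rw [bv_1r m' x₀' U] at E34
    rw [bv_1mr m' x₀' U] at E35
    rw [bv_rmr m' x₀' U hREL] at E45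
    have hI0 := cancel_D _ _ _ _ _ _ _ _ _ _ _ _ hd1 hd2 hd4 hd5 E24 E35 E23 E45
    have E45' : d5 * d4 * (-(2*(U^2-1)*(m'^2+U^4))) = -(2*(u^2-1)*(m^2+u^4)) := by
      linear_combination E45
    have hII0 := cancel_D _ _ _ _ _ _ _ _ _ _ _ _ hd1 hd2 hd5 hd4 E25 E34 E23 E45'
    exact endgame m x₀ u m' x₀' U (m'^4*x₀'^4*U^2*(U+1)^2) (m'^4*x₀'^4*U^2*(U-1)^2)
      hm hx₀ hu1 hm' hx₀' hU1 hrel hREL (Or.inr ⟨rfl, rfl⟩)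
      (by linear_combination hI0) (by linear_combination hII0)
  · -- (-1, 1, -U, U) : aligned
    rw [bv_mp m' x₀'] at E23
    rw [bv_m1mr m' x₀' U] at E24
    rw [bv_m1r m' x₀' U] at E25
    rw [bv_1mr m' x₀' U] at E34
    rw [bv_1r m' x₀' U] at E35
    rw [bv_mrr m' x₀' U hREL] at E45
    have hI0 := cancel_D _ _ _ _ _ _ _ _ _ _ _ _ hd1 hd2 hd4 hd5 E24 E35 E23 E45
    have E45' : d5 * d4 * (-(2*(U^2-1)*(m'^2+U^4))) = -(2*(u^2-1)*(m^2+u^4)) := by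
      linear_combination E45
    have hII0 := cancel_D _ _ _ _ _ _ _ _ _ _ _ _ hd1 hd2 hd5 hd4 E25 E34 E23 E45'
    exact endgame m x₀ u m' x₀' U (m'^4*x₀'^4*U^2*(U-1)^2) (m'^4*x₀'^4*U^2*(U+1)^2)
      hm hx₀ hu1 hm' hx₀' hU1 hrel hREL (Or.inl ⟨rfl, rfl⟩)
      (by linear_combination hI0) (by linear_combination hII0)
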